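/- The MPMRF vector satisfies the local Markov property of its tree: if T=(V,E) is a tree on d vertices rooted at r, λ>0, α∈(0,1)^{d−1}, and N=(N_v)_{v∈V}∼MPMRF(λ,α,T), then for all u,w∈V with u≠w and (u,w)∉E, the random variables N_u and N_w are conditionally independent given the σ-algebra generated by the family {N_j : (u,j)∈E}. -/

import Mathlib

open MeasureTheory ProbabilityTheory
open scoped ENNReal Classical

noncomputable section

/-- `X` has the Poisson distribution with (real) parameter `r`. -/
def IsPoissonRV {Ω : Type*} [MeasureSpace Ω] (X : Ω → ℕ) (r : ℝ) : Prop :=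
  Measurable X ∧ ∀ k : ℕ,
    (ℙ : Measure Ω) {ω | X ω = k} = ENNReal.ofReal (Real.exp (-r) * r ^ k / (Nat.factorial k))

/-- `X` is a Bernoulli random variable with success probability `p`. -/
def IsBernoulliRV {Ω : Type*} [MeasureSpace Ω] (X : Ω → Bool) (p : ℝ) : Prop :=
  Measurable X ∧ (ℙ : Measure Ω) {ω | X ω = true} = ENNReal.ofReal p

/-- `pa` is the parent map of the tree `G` rooted at `r`. -/
def IsParentMap {V : Type*} (G : SimpleGraph V) (r : V) (pa : V → V) : Prop :=
  pa r = r ∧ (∀ v, v ≠ r → G.Adj (pa v) v) ∧ ∀ v, ∃ n : ℕ, pa^[n] v = r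

/-- `N` is an MPMRF vector built (via binomial thinning of the parent value plus an
independent Poisson innovation) along the tree with parent map `pa` rooted at `r`. -/
def IsMPMRF {V Ω : Type*} [Fintype V] [DecidableEq V] [MeasureSpace Ω]
    (lam : ℝ) (α : V → V → ℝ) (pa : V → V) (r : V) (N : V → Ω → ℕ) : Prop :=
  ∃ (L : V → Ω → ℕ) (I : V → ℕ → Ω → Bool),
    iIndepFun
      (Sum.elim L (fun (p : V × ℕ) (ω : Ω) => (if I p.1 p.2 ω then 1 else 0 : ℕ))) ℙ ∧
    IsPoissonRV (L r) lam ∧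
    (∀ v, v ≠ r → IsPoissonRV (L v) (lam * (1 - α (pa v) v))) ∧
    (∀ v i, IsBernoulliRV (I v i) (α (pa v) v)) ∧
    (∀ ω, N r ω = L r ω) ∧
    ∀ v, v ≠ r → ∀ ω, N v ω = L v ω + ∑ i ∈ Finset.range (N (pa v) ω), (if I v i ω then 1 else 0)

/-- supermodular function on ℝ². -/
def Supermodular (ζ : ℝ × ℝ → ℝ) : Prop :=
  ∀ x y : ℝ × ℝ, ζ x + ζ y ≤ ζ (x ⊓ y) + ζ (x ⊔ y)

/-- supermodular order for bivariate random vectors. -/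
def SupermodularLE {Ω Ω' : Type*} [MeasureSpace Ω] [MeasureSpace Ω']
    (X : Ω → ℝ × ℝ) (Y : Ω' → ℝ × ℝ) : Prop :=
  ∀ ζ : ℝ × ℝ → ℝ, Supermodular ζ →
    Integrable (fun ω => ζ (X ω)) ℙ → Integrable (fun ω => ζ (Y ω)) ℙ →
    ∫ ω, ζ (X ω) ∂ℙ ≤ ∫ ω, ζ (Y ω) ∂ℙ

/-- usual stochastic order for ℕ-valued random variables. -/
def StochLE {Ω Ω' : Type*} [MeasureSpace Ω] [MeasureSpace Ω']
    (X : Ω → ℕ) (Y : Ω' → ℕ) : Prop :=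
  ∀ k : ℕ, (ℙ : Measure Ω) {ω | k < X ω} ≤ (ℙ : Measure Ω') {ω | k < Y ω}

/-- convex order for real random variables. -/
def ConvexLE {Ω Ω' : Type*} [MeasureSpace Ω] [MeasureSpace Ω']
    (X : Ω → ℝ) (Y : Ω' → ℝ) : Prop :=
  ∀ φ : ℝ → ℝ, ConvexOn ℝ Set.univ φ →
    Integrable (fun ω => φ (X ω)) ℙ → Integrable (fun ω => φ (Y ω)) ℙ →
    ∫ ω, φ (X ω) ∂ℙ ≤ ∫ ω, φ (Y ω) ∂ℙ

/-- the recursive family of pgf's `η_v^{T_r}` associated with the rooted tree with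
parent map `pa` and edge parameters `α`. -/
def IsEta {V : Type*} [Fintype V] (α : V → V → ℝ) (pa : V → V) (η : V → ℝ → ℝ) : Prop :=
  ∀ v t, η v t = t * ∏ j ∈ Finset.univ.filter (fun j => pa j = v ∧ j ≠ v),
    (1 - α v j + α v j * η j t)

/-- `g` is the probability generating function of `X` (on `[-1,1]`). -/
def HasPGF {Ω : Type*} [MeasureSpace Ω] (X : Ω → ℕ) (g : ℝ → ℝ) : Prop :=
  ∀ t ∈ Set.Icc (-1 : ℝ) 1, ∫ ω, t ^ X ω ∂ℙ = g t

/-!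
Every `N v` is built from independent innovations attached to vertices: the Poisson variable `L v`
and the thinning coins at `v`. Since the neighbour values `Z` are countably valued, conditional
independence given `σ(Z)` amounts to independence under each conditioned measure `ℙ[|Z = z]`.

One neighbour `g` of `u`, the gateway, separates two disjoint vertex sets whose innovations
generate independent σ-algebras `m₁`, `m₂`. If `u` is an ancestor of `w`, `g` is the child of `u`
towards `w`: `N w` is a random function of `N g` built from the innovations strictly below `g`,
while `N u` and all neighbours of `u` use none of them. Otherwise `g` is the parent of `u`: `N u`
and the children of `u` are random functions of `N g` built from the innovations in the subtree
of `u`, while `N g` and `N w` use none of them. On `{Z = z}` the gateway is frozen at `z g`, which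
makes `N u` and `N w` agree with an `m₁`- and an `m₂`-measurable variable, and the event
`{Z = z}` splits as `C ∩ E` with `C ∈ m₁`, `E ∈ m₂`; conditioning on such an event keeps `m₁` and
`m₂` independent.
-/

section CondIndep

variable {Ω : Type*} {mΩ : MeasurableSpace Ω} {μ : Measure Ω} [IsFiniteMeasure μ]
  {m₁ m₂ : MeasurableSpace Ω}

lemma ProbabilityTheory.Indep.cond_left (h : Indep m₁ m₂ μ) (hle₁ : m₁ ≤ mΩ)
    {C : Set Ω} (hC : MeasurableSet[m₁] C) : Indep m₁ m₂ μ[|C] := by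
  rw [Indep_iff] at h ⊢
  intro A B hA hB
  rcases eq_or_ne (μ C) 0 with hC0 | hC0
  · simp [cond_eq_zero_of_meas_eq_zero hC0]
  have hCB : μ[B | C] = μ B := by
    rw [cond_apply (hle₁ _ hC), h C B hC hB, ← mul_assoc,
      ENNReal.inv_mul_cancel hC0 (measure_ne_top μ C), one_mul]
  rw [hCB, cond_apply (hle₁ _ hC), cond_apply (hle₁ _ hC), ← Set.inter_assoc,
    h _ B (hC.inter hA) hB, mul_assoc]

lemma ProbabilityTheory.Indep.cond_inter (h : Indep m₁ m₂ μ) (hle₁ : m₁ ≤ mΩ)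
    (hle₂ : m₂ ≤ mΩ) {C E : Set Ω} (hC : MeasurableSet[m₁] C) (hE : MeasurableSet[m₂] E) :
    Indep m₁ m₂ μ[|C ∩ E] := by
  rw [← cond_cond_eq_cond_inter (hle₁ _ hC) (hle₂ _ hE)]
  exact ((h.cond_left hle₁ hC).symm.cond_left hle₂ hE).symm

lemma ProbabilityTheory.Indep.indepFun_cond_of_eqOn {β β' : Type*} [MeasurableSpace β]
    [MeasurableSpace β'] (h : Indep m₁ m₂ μ) (hle₁ : m₁ ≤ mΩ) (hle₂ : m₂ ≤ mΩ)
    {C E : Set Ω} (hC : MeasurableSet[m₁] C) (hE : MeasurableSet[m₂] E)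
    {X X' : Ω → β} {Y Y' : Ω → β'} (hX' : Measurable[m₁] X') (hY' : Measurable[m₂] Y')
    (hX : Set.EqOn X X' (C ∩ E)) (hY : Set.EqOn Y Y' (C ∩ E)) :
    IndepFun X Y μ[|C ∩ E] := by
  have hmem : ∀ᵐ ω ∂μ[|C ∩ E], ω ∈ C ∩ E := ae_cond_mem ((hle₁ _ hC).inter (hle₂ _ hE))
  have h' : IndepFun X' Y' μ[|C ∩ E] := by
    rw [IndepFun_iff_Indep]
    exact indep_of_indep_of_le_right (indep_of_indep_of_le_left (h.cond_inter hle₁ hle₂ hC hE)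
      hX'.comap_le) hY'.comap_le
  exact h'.congr (hmem.mono fun ω hω ↦ (hX hω).symm) (hmem.mono fun ω hω ↦ (hY hω).symm)

end CondIndep

section Discrete

variable {Ω γ : Type*} {mΩ : MeasurableSpace Ω} {μ : Measure Ω} [IsFiniteMeasure μ]
  [MeasurableSpace γ] [Countable γ] [MeasurableSingletonClass γ] {Z : Ω → γ}

lemma condExp_set_comap_ae_eq_cond (hZ : Measurable Z) {A : Set Ω} (hA : MeasurableSet A) :
    μ⟦A | MeasurableSpace.comap Z inferInstance⟧ =ᵐ[μ] fun ω ↦ (μ[|Z ⁻¹' {Z ω}]).real A := by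
  set g := μ⟦A | MeasurableSpace.comap Z inferInstance⟧
  have hconst : Function.FactorsThrough g Z := stronglyMeasurable_condExp.factorsThrough
  have hatom : ∀ z, MeasurableSet[MeasurableSpace.comap Z inferInstance] (Z ⁻¹' {z}) :=
    fun z ↦ ⟨{z}, measurableSet_singleton z, rfl⟩
  have hnull : ∀ᵐ ω ∂μ, μ (Z ⁻¹' {Z ω}) ≠ 0 := by
    refine ae_of_ae_map (p := fun z ↦ μ (Z ⁻¹' {z}) ≠ 0) hZ.aemeasurable
      (ae_iff_of_countable.2 fun z hz ↦ ?_)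
    rwa [Measure.map_apply hZ (measurableSet_singleton z)] at hz
  filter_upwards [hnull] with ω hω
  have hint : ∫ ω' in Z ⁻¹' {Z ω}, g ω' ∂μ = μ.real (Z ⁻¹' {Z ω} ∩ A) := by
    rw [setIntegral_condExp hZ.comap_le ((integrable_const 1).indicator hA) (hatom _),
      setIntegral_indicator hA, setIntegral_const, smul_eq_mul, mul_one]
  have hint' : ∫ ω' in Z ⁻¹' {Z ω}, g ω' ∂μ = μ.real (Z ⁻¹' {Z ω}) * g ω := by
    rw [setIntegral_congr_fun (hZ (measurableSet_singleton _))
      (fun ω' hω' ↦ hconst hω'), setIntegral_const, smul_eq_mul]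
  have hpos : μ.real (Z ⁻¹' {Z ω}) ≠ 0 := ENNReal.toReal_ne_zero.2 ⟨hω, measure_ne_top _ _⟩
  rw [Measure.real, cond_apply (hZ (measurableSet_singleton _)), ENNReal.toReal_mul,
    ENNReal.toReal_inv, ← Measure.real, ← Measure.real, ← hint, hint', inv_mul_cancel_left₀ hpos]

theorem condIndepFun_comap_of_forall_indepFun_cond [StandardBorelSpace Ω] {β β' : Type*}
    [MeasurableSpace β] [MeasurableSpace β'] {X : Ω → β} {Y : Ω → β'}
    (hZ : Measurable Z) (hX : Measurable X) (hY : Measurable Y)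
    (h : ∀ z, IndepFun X Y μ[|Z ⁻¹' {z}]) :
    CondIndepFun (MeasurableSpace.comap Z inferInstance) hZ.comap_le X Y μ := by
  rw [condIndepFun_iff_condExp_inter_preimage_eq_mul hX hY]
  intro s t hs ht
  filter_upwards [condExp_set_comap_ae_eq_cond hZ ((hX hs).inter (hY ht)),
    condExp_set_comap_ae_eq_cond hZ (hX hs), condExp_set_comap_ae_eq_cond hZ (hY ht)]
    with ω h₁₂ h₁ h₂
  rw [h₁₂, h₁, h₂, measureReal_def, measureReal_def, measureReal_def,
    (h (Z ω)).measure_inter_preimage_eq_mul s t hs ht, ENNReal.toReal_mul]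

end Discrete

lemma MeasurableSpace.iSup_mem_comap_eq_comap_pi {ι Ω β : Type*} [MeasurableSpace β]
    (f : ι → Ω → β) (s : Set ι) :
    ⨆ i ∈ s, MeasurableSpace.comap (f i) inferInstance =
      MeasurableSpace.comap (fun ω (i : s) ↦ f i ω) MeasurableSpace.pi := by
  rw [MeasurableSpace.pi, MeasurableSpace.comap_iSup, iSup_subtype']
  simp_rw [MeasurableSpace.comap_comp]
  rfl

section RandomFunction

variable {Ω : Type*} {m : MeasurableSpace Ω}

def IsRandomFunctionOf (m : MeasurableSpace Ω) (X G : Ω → ℕ) : Prop :=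
  ∃ F : ℕ → Ω → ℕ, (∀ n, Measurable[m] (F n)) ∧ ∀ ω, X ω = F (G ω) ω

lemma measurable_apply_of_forall_measurable {F : ℕ → Ω → ℕ} (hF : ∀ n, Measurable[m] (F n))
    {G : Ω → ℕ} (hG : Measurable[m] G) : Measurable[m] fun ω ↦ F (G ω) ω :=
  (measurable_from_prod_countable_left (f := fun p : Ω × ℕ ↦ F p.2 p.1) hF).comp
    (measurable_id.prodMk hG)

namespace IsRandomFunctionOf

lemma refl (X : Ω → ℕ) : IsRandomFunctionOf m X X :=
  ⟨fun n _ ↦ n, fun _ ↦ measurable_const, fun _ ↦ rfl⟩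

lemma measurable {X G : Ω → ℕ} (h : IsRandomFunctionOf m X G) (hG : Measurable[m] G) :
    Measurable[m] X := by
  obtain ⟨F, hF, hX⟩ := h
  rw [funext hX]
  exact measurable_apply_of_forall_measurable hF hG

lemma trans {X Y G : Ω → ℕ} (hXY : IsRandomFunctionOf m X Y) (hYG : IsRandomFunctionOf m Y G) :
    IsRandomFunctionOf m X G := by
  obtain ⟨F, hF, hX⟩ := hXY
  obtain ⟨F', hF', hY⟩ := hYG
  exact ⟨fun n ω ↦ F (F' n ω) ω, fun n ↦ measurable_apply_of_forall_measurable hF (hF' n),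
    fun ω ↦ by rw [hX, hY]⟩

end IsRandomFunctionOf

end RandomFunction

section Gateway

variable {Ω : Type*} {mΩ : MeasurableSpace Ω} {μ : Measure Ω} [IsFiniteMeasure μ]
  {m₁ m₂ : MeasurableSpace Ω}

theorem ProbabilityTheory.Indep.indepFun_cond_of_gateway (h : Indep m₁ m₂ μ)
    (hle₁ : m₁ ≤ mΩ) (hle₂ : m₂ ≤ mΩ) {J : Type*} [Countable J] {Z : Ω → J → ℕ}
    {X Y : Ω → ℕ} (j₀ : J) (hZ₀ : Measurable[m₂] fun ω ↦ Z ω j₀)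
    (hZ : ∀ j, IsRandomFunctionOf m₁ (fun ω ↦ Z ω j) (fun ω ↦ Z ω j₀) ∨
      Measurable[m₂] fun ω ↦ Z ω j)
    (hX : IsRandomFunctionOf m₁ X fun ω ↦ Z ω j₀) (hY : Measurable[m₂] Y) (z : J → ℕ) :
    IndepFun X Y μ[|Z ⁻¹' {z}] := by
  have hsplit : ∀ j, ∃ C E : Set Ω, MeasurableSet[m₁] C ∧ MeasurableSet[m₂] E ∧
      ∀ ω, Z ω j₀ = z j₀ → (Z ω j = z j ↔ ω ∈ C ∩ E) := by
    intro j
    rcases hZ j with ⟨F, hF, hZj⟩ | hZj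
    · refine ⟨F (z j₀) ⁻¹' {z j}, Set.univ, hF _ (measurableSet_singleton _),
        MeasurableSet.univ, fun ω hω ↦ ?_⟩
      simp [hZj ω, hω]
    · exact ⟨Set.univ, _, MeasurableSet.univ, hZj (measurableSet_singleton (z j)),
        fun ω _ ↦ by simp⟩
  choose C E hC hE hCE using hsplit
  have hatom : Z ⁻¹' {z} = (⋂ j, C j) ∩ ((fun ω ↦ Z ω j₀) ⁻¹' {z j₀} ∩ ⋂ j, E j) := by
    ext ω
    simp only [Set.mem_preimage, Set.mem_singleton_iff, Set.mem_inter_iff, Set.mem_iInter,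
      funext_iff]
    refine ⟨fun hz ↦ ?_, fun ⟨hC', h₀, hE'⟩ j ↦ (hCE j ω h₀).2 ⟨hC' j, hE' j⟩⟩
    have hj := fun j ↦ (hCE j ω (hz j₀)).1 (hz j)
    exact ⟨fun j ↦ (hj j).1, hz j₀, fun j ↦ (hj j).2⟩
  obtain ⟨F, hF, hXF⟩ := hX
  rw [hatom]
  refine h.indepFun_cond_of_eqOn hle₁ hle₂ (MeasurableSet.iInter hC)
    ((hZ₀ (measurableSet_singleton _)).inter (MeasurableSet.iInter hE)) (hF (z j₀)) hY
    (fun ω hω ↦ ?_) (Set.eqOn_refl _ _)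
  rw [hXF ω, hω.2.1]

end Gateway

section ParentMap

variable {V : Type*} {pa : V → V} {r a c x : V}

def descendants (pa : V → V) (a : V) : Set V := {x | ∃ k, pa^[k] x = a}

lemma self_mem_descendants : a ∈ descendants pa a := ⟨0, rfl⟩

lemma mem_descendants_of_parent_mem (h : pa x ∈ descendants pa a) : x ∈ descendants pa a := by
  obtain ⟨k, hk⟩ := h
  exact ⟨k + 1, hk⟩

lemma iterate_notMem_descendants (h : x ∉ descendants pa a) (k : ℕ) :
    pa^[k] x ∉ descendants pa a := fun ⟨e, he⟩ ↦ h ⟨e + k, by rwa [Function.iterate_add_apply]⟩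

lemma iterate_mem_compl_preimage_descendants (h : pa x ∉ descendants pa c) (k : ℕ) :
    pa^[k] x ∈ (pa ⁻¹' descendants pa c)ᶜ := by
  have := iterate_notMem_descendants h k
  rwa [← Function.iterate_succ_apply, Function.iterate_succ_apply'] at this

lemma exists_parent_eq_of_mem_descendants (hx : x ∈ descendants pa a) (hxa : x ≠ a) :
    ∃ c, c ≠ a ∧ pa c = a ∧ x ∈ descendants pa c := by
  obtain ⟨k, hk⟩ := hx
  induction k generalizing x with
  | zero => exact absurd hk hxa
  | succ k ih =>
    by_cases hpx : pa x = a
    · exact ⟨x, hxa, hpx, self_mem_descendants⟩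
    obtain ⟨c, hca, hpc, hc⟩ := ih hpx hk
    exact ⟨c, hca, hpc, mem_descendants_of_parent_mem hc⟩

variable {G : SimpleGraph V}

lemma IsParentMap.mem_descendants_root (hpa : IsParentMap G r pa) (x : V) :
    x ∈ descendants pa r := hpa.2.2 x

lemma IsParentMap.eq_root_of_iterate_eq (hpa : IsParentMap G r pa) {k : ℕ}
    (hk : pa^[k + 1] x = x) : x = r := by
  obtain ⟨n, hn⟩ := hpa.2.2 x
  calc x = pa^[(k + 1) * n] x := by rw [Function.iterate_mul, Function.iterate_fixed hk]
    _ = pa^[k * n] (pa^[n] x) := by rw [← Function.iterate_add_apply, add_one_mul]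
    _ = r := by rw [hn, Function.iterate_fixed hpa.1]

lemma IsParentMap.iterate_succ_notMem_descendants (hpa : IsParentMap G r pa) (hc : c ≠ r)
    (i : ℕ) : pa^[i + 1] c ∉ descendants pa c := fun ⟨k, hk⟩ ↦
  hc (hpa.eq_root_of_iterate_eq (k := k + i) (by rwa [← Function.iterate_add_apply] at hk))

lemma IsParentMap.parent_eq_or_eq_parent_of_adj [Fintype V] (hG : G.IsTree)
    (hpa : IsParentMap G r pa) {a b : V} (hab : G.Adj a b) : pa b = a ∨ pa a = b := by
  have hinj : Set.InjOn (fun v ↦ s(pa v, v)) (Finset.univ.erase r : Finset V) := by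
    intro x hx y hy hxy
    rcases Sym2.eq_iff.1 hxy with ⟨-, h⟩ | ⟨h₁, h₂⟩
    · exact h
    · exact absurd (hpa.eq_root_of_iterate_eq (k := 1) (by simp [h₁, ← h₂]))
        (Finset.ne_of_mem_erase hx)
  have hsub : (Finset.univ.erase r).image (fun v ↦ s(pa v, v)) ⊆ G.edgeFinset := by
    simp only [Finset.image_subset_iff, Finset.mem_erase, SimpleGraph.mem_edgeFinset,
      SimpleGraph.mem_edgeSet]
    exact fun v hv ↦ hpa.2.1 v hv.1
  have hcard : G.edgeFinset.card ≤ ((Finset.univ.erase r).image (fun v ↦ s(pa v, v))).card := by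
    rw [Finset.card_image_of_injOn hinj, Finset.card_erase_of_mem (Finset.mem_univ r),
      Finset.card_univ, ← hG.card_edgeFinset]
    simp
  have hmem : s(a, b) ∈ (Finset.univ.erase r).image (fun v ↦ s(pa v, v)) := by
    rw [Finset.eq_of_subset_of_card_le hsub hcard, SimpleGraph.mem_edgeFinset]
    exact hab
  obtain ⟨v, -, hv⟩ := Finset.mem_image.1 hmem
  rcases Sym2.eq_iff.1 hv with ⟨h₁, h₂⟩ | ⟨h₁, h₂⟩
  · exact Or.inl (h₂ ▸ h₁)
  · exact Or.inr (h₂ ▸ h₁)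

end ParentMap

section Innovations

variable {V Ω : Type*} {mΩ : MeasurableSpace Ω} {L : V → Ω → ℕ} {I : V → ℕ → Ω → Bool}
  {A B : Set V}

/-- `inl v` indexes the innovation `L v`, `inr (v, i)` the `i`-th thinning coin at `v`; both sit
at the vertex `Sum.elim id Prod.fst`. -/
def innovations (L : V → Ω → ℕ) (I : V → ℕ → Ω → Bool) : V ⊕ V × ℕ → Ω → ℕ :=
  Sum.elim L fun p ω ↦ if I p.1 p.2 ω then 1 else 0

abbrev innovationSigma (L : V → Ω → ℕ) (I : V → ℕ → Ω → Bool) (A : Set V) : MeasurableSpace Ω :=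
  ⨆ i ∈ Sum.elim id Prod.fst ⁻¹' A, MeasurableSpace.comap (innovations L I i) inferInstance

lemma innovationSigma_le (hK : ∀ i, Measurable (innovations L I i)) :
    innovationSigma L I A ≤ mΩ :=
  iSup₂_le fun i _ ↦ (hK i).comap_le

lemma measurable_innovations_of_mem {i : V ⊕ V × ℕ} (hi : Sum.elim id Prod.fst i ∈ A) :
    Measurable[innovationSigma L I A] (innovations L I i) :=
  Measurable.of_comap_le (le_iSup₂ (f := fun i (_ : i ∈ Sum.elim id Prod.fst ⁻¹' A) ↦
    MeasurableSpace.comap (innovations L I i) inferInstance) i hi)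

lemma ProbabilityTheory.iIndepFun.indep_innovationSigma {μ : Measure Ω}
    (h : iIndepFun (innovations L I) μ) (hK : ∀ i, Measurable (innovations L I i))
    (hAB : Disjoint A B) : Indep (innovationSigma L I A) (innovationSigma L I B) μ :=
  indep_iSup_of_disjoint (fun i ↦ (hK i).comap_le) h.iIndep (hAB.preimage _)

end Innovations

section ThinningRecursion

variable {V Ω : Type*} {mΩ : MeasurableSpace Ω} {L : V → Ω → ℕ} {I : V → ℕ → Ω → Bool}
  {pa : V → V} {r : V} {N : V → Ω → ℕ} {A : Set V} {x : V}

def IsThinningRecursion (L : V → Ω → ℕ) (I : V → ℕ → Ω → Bool) (pa : V → V) (r : V)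
    (N : V → Ω → ℕ) : Prop :=
  (∀ ω, N r ω = L r ω) ∧
    ∀ v, v ≠ r → ∀ ω, N v ω = L v ω + ∑ i ∈ Finset.range (N (pa v) ω), if I v i ω then 1 else 0

namespace IsThinningRecursion

lemma isRandomFunctionOf_parent (hN : IsThinningRecursion L I pa r N) (hroot : pa r = r)
    (hx : x ∈ A) : IsRandomFunctionOf (innovationSigma L I A) (N x) (N (pa x)) := by
  by_cases hxr : x = r
  · subst hxr
    rw [hroot]
    exact IsRandomFunctionOf.refl _
  refine ⟨fun n ω ↦ L x ω + ∑ i ∈ Finset.range n, if I x i ω then 1 else 0, fun n ↦ ?_,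
    hN.2 x hxr⟩
  exact (measurable_innovations_of_mem (i := .inl x) hx).add
    (Finset.measurable_sum _ fun i _ ↦ measurable_innovations_of_mem (i := .inr (x, i)) hx)

lemma isRandomFunctionOf_of_mem_descendants (hN : IsThinningRecursion L I pa r N)
    (hroot : pa r = r) {c : V} (hx : x ∈ descendants pa c) :
    IsRandomFunctionOf (innovationSigma L I (pa ⁻¹' descendants pa c)) (N x) (N c) := by
  obtain ⟨k, hk⟩ := hx
  induction k generalizing x with
  | zero => subst hk; exact IsRandomFunctionOf.refl _
  | succ k ih =>
    have hpx : pa x ∈ descendants pa c := ⟨k, hk⟩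
    exact (hN.isRandomFunctionOf_parent (A := pa ⁻¹' descendants pa c) hroot hpx).trans (ih hk)

lemma measurable_of_forall_iterate_mem {G : SimpleGraph V} (hN : IsThinningRecursion L I pa r N)
    (hpa : IsParentMap G r pa) (hx : ∀ k, pa^[k] x ∈ A) :
    Measurable[innovationSigma L I A] (N x) := by
  obtain ⟨n, hn⟩ := hpa.mem_descendants_root x
  induction n generalizing x with
  | zero =>
    obtain rfl : x = r := hn
    rw [show N x = L x from funext hN.1]
    exact measurable_innovations_of_mem (i := .inl x) (hx 0)
  | succ n ih =>
    exact (hN.isRandomFunctionOf_parent hpa.1 (hx 0)).measurable (ih (fun k ↦ hx (k + 1)) hn)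

end IsThinningRecursion

end ThinningRecursion

section LocalMarkov

variable {V Ω : Type*} {mΩ : MeasurableSpace Ω} {μ : Measure Ω} [IsFiniteMeasure μ]
  {L : V → Ω → ℕ} {I : V → ℕ → Ω → Bool} {pa : V → V} {r : V} {N : V → Ω → ℕ}
  {G : SimpleGraph V} {u w : V}

namespace IsThinningRecursion

variable [Fintype V]

lemma indepFun_cond_neighbors_of_mem_descendants (hG : G.IsTree) (hpa : IsParentMap G r pa)
    (hind : iIndepFun (innovations L I) μ) (hK : ∀ i, Measurable (innovations L I i))
    (hN : IsThinningRecursion L I pa r N) (huw : u ≠ w) (hw : w ∈ descendants pa u)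
    (z : G.neighborSet u → ℕ) :
    IndepFun (N u) (N w) μ[|(fun ω (j : G.neighborSet u) ↦ N j ω) ⁻¹' {z}] := by
  obtain ⟨c, hcu, hpc, hwc⟩ := exists_parent_eq_of_mem_descendants hw huw.symm
  have hcr : c ≠ r := fun h ↦ hcu (by rw [← hpc, h, hpa.1])
  -- `pa x` is a strict ancestor of `c`, so no ancestor of `x` is a proper descendant of `c`
  have hfar : ∀ x i, pa x = pa^[i + 1] c →
      Measurable[innovationSigma L I (pa ⁻¹' descendants pa c)ᶜ] (N x) := fun x i hx ↦
    hN.measurable_of_forall_iterate_mem hpa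
      (iterate_mem_compl_preimage_descendants (hx ▸ hpa.iterate_succ_notMem_descendants hcr i))
  refine IndepFun.symm <|
    (hind.indep_innovationSigma hK disjoint_compl_right).indepFun_cond_of_gateway
    (innovationSigma_le hK) (innovationSigma_le hK) ⟨c, hpc ▸ hpa.2.1 c hcr⟩ (hfar c 0 rfl)
    (fun j ↦ Or.inr ?_) (hN.isRandomFunctionOf_of_mem_descendants hpa.1 hwc)
    (hfar u 1 (by rw [← hpc]; rfl)) z
  rcases hpa.parent_eq_or_eq_parent_of_adj hG j.2 with h | h
  · exact hfar j 0 (h.trans hpc.symm)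
  · exact hfar j 2 (by rw [← h, ← hpc]; rfl)

lemma indepFun_cond_neighbors_of_notMem_descendants (hG : G.IsTree) (hpa : IsParentMap G r pa)
    (hind : iIndepFun (innovations L I) μ) (hK : ∀ i, Measurable (innovations L I i))
    (hN : IsThinningRecursion L I pa r N) (hw : w ∉ descendants pa u)
    (z : G.neighborSet u → ℕ) :
    IndepFun (N u) (N w) μ[|(fun ω (j : G.neighborSet u) ↦ N j ω) ⁻¹' {z}] := by
  have hur : u ≠ r := by
    rintro rfl
    exact hw (hpa.mem_descendants_root w)
  have hpu : pa u ∉ descendants pa u := hpa.iterate_succ_notMem_descendants hur 0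
  have hstep : ∀ x ∈ descendants pa u,
      IsRandomFunctionOf (innovationSigma L I (descendants pa u)) (N x) (N (pa x)) :=
    fun x hx ↦ hN.isRandomFunctionOf_parent hpa.1 hx
  refine (hind.indep_innovationSigma hK disjoint_compl_right).indepFun_cond_of_gateway
    (innovationSigma_le hK) (innovationSigma_le hK) ⟨pa u, (hpa.2.1 u hur).symm⟩
    (hN.measurable_of_forall_iterate_mem hpa (iterate_notMem_descendants hpu))
    (fun j ↦ Or.inl ?_) (hstep u self_mem_descendants)
    (hN.measurable_of_forall_iterate_mem hpa (iterate_notMem_descendants hw)) z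
  rcases hpa.parent_eq_or_eq_parent_of_adj hG j.2 with h | h
  · have hj := hstep j (mem_descendants_of_parent_mem (by rw [h]; exact self_mem_descendants))
    rw [h] at hj
    exact hj.trans (hstep u self_mem_descendants)
  · rw [← h]
    exact IsRandomFunctionOf.refl _

end IsThinningRecursion

end LocalMarkov

lemma IsMPMRF.exists_innovations {V Ω : Type*} [Fintype V] [DecidableEq V] [MeasureSpace Ω]
    {lam : ℝ} {α : V → V → ℝ} {pa : V → V} {r : V} {N : V → Ω → ℕ}
    (hN : IsMPMRF lam α pa r N) :
    ∃ (L : V → Ω → ℕ) (I : V → ℕ → Ω → Bool), iIndepFun (innovations L I) ℙ ∧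
      (∀ i, Measurable (innovations L I i)) ∧ IsThinningRecursion L I pa r N := by
  obtain ⟨L, I, hind, hLr, hL, hI, hNr, hNrec⟩ := hN
  refine ⟨L, I, hind, ?_, hNr, hNrec⟩
  rintro (v | ⟨v, i⟩)
  · by_cases hv : v = r
    · exact hv ▸ hLr.1
    · exact (hL v hv).1
  · exact (measurable_of_countable fun b : Bool ↦ if b then 1 else 0).comp (hI v i).1

theorem mpmrf_local_markov_general
    {V Ω : Type*} [Fintype V] [DecidableEq V] [MeasureSpace Ω]
    [StandardBorelSpace Ω] [IsProbabilityMeasure (ℙ : Measure Ω)]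
    (G : SimpleGraph V) (hG : G.IsTree)
    (r : V) (pa : V → V) (hpa : IsParentMap G r pa)
    (lam : ℝ)
    (α : V → V → ℝ)
    (N : V → Ω → ℕ) (hN : IsMPMRF lam α pa r N)
    (u w : V) (huw : u ≠ w)
    (m' : MeasurableSpace Ω)
    (hm'def : m' = ⨆ j ∈ {j : V | G.Adj u j},
      MeasurableSpace.comap (N j) (inferInstance : MeasurableSpace ℕ))
    (hm' : m' ≤ (MeasureSpace.toMeasurableSpace : MeasurableSpace Ω)) :
    CondIndepFun m' hm' (N u) (N w) (μ := ℙ) := by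
  rw [MeasurableSpace.iSup_mem_comap_eq_comap_pi] at hm'def
  subst hm'def
  obtain ⟨L, I, hind, hK, hrec⟩ := hN.exists_innovations
  have hmeas : ∀ v, Measurable (N v) := fun v ↦
    (hrec.measurable_of_forall_iterate_mem (A := Set.univ) hpa fun _ ↦ trivial).mono
      (innovationSigma_le hK) le_rfl
  have hZ : Measurable fun ω (j : {j : V | G.Adj u j}) ↦ N j ω :=
    measurable_pi_lambda _ fun j ↦ hmeas j
  refine condIndepFun_comap_of_forall_indepFun_cond hZ (hmeas u) (hmeas w) fun z ↦ ?_
  by_cases hw : w ∈ descendants pa u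
  · exact hrec.indepFun_cond_neighbors_of_mem_descendants hG hpa hind hK huw hw z
  · exact hrec.indepFun_cond_neighbors_of_notMem_descendants hG hpa hind hK hw z

/-- the MPMRF vector satisfies the local Markov property of its tree. -/
theorem mpmrf_local_markov
    {V Ω : Type*} [Fintype V] [DecidableEq V] [MeasureSpace Ω]
    [StandardBorelSpace Ω] [IsProbabilityMeasure (ℙ : Measure Ω)]
    (d : ℕ) (hd : Fintype.card V = d)
    (G : SimpleGraph V) (hG : G.IsTree)
    (r : V) (pa : V → V) (hpa : IsParentMap G r pa)
    (lam : ℝ) (hlam : 0 < lam)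
    (α : V → V → ℝ) (hα : ∀ a b, G.Adj a b → α a b ∈ Set.Ioo (0 : ℝ) 1)
    (N : V → Ω → ℕ) (hN : IsMPMRF lam α pa r N)
    (u w : V) (huw : u ≠ w) (hnadj : ¬ G.Adj u w)
    (m' : MeasurableSpace Ω)
    (hm'def : m' = ⨆ j ∈ {j : V | G.Adj u j},
      MeasurableSpace.comap (N j) (inferInstance : MeasurableSpace ℕ))
    (hm' : m' ≤ (MeasureSpace.toMeasurableSpace : MeasurableSpace Ω)) :
    CondIndepFun m' hm' (N u) (N w) (μ := ℙ) :=
  mpmrf_local_markov_general G hG r pa hpa lam α N hN u w huw m' hm'def hm'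

end
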